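/- arXiv:2208.06685 — 4 statements merged into one kernel-verified Lean document; each statement's English description precedes it below -/
import Mathlib

section
/- Let B be a Binomial(n, p) random variable with n ≥ 1 and p ∈ (0,1). Then E[1/(1+B)] ≤ 1/((n+1)p). -/
/-- For `B ~ Binomial(n, p)` with `n ≥ 1` and `p ∈ (0,1)`,
`E[1/(1+B)] ≤ 1/((n+1) p)`. -/
theorem binomial_inv_shifted_expectation_le (n : ℕ) (hn : 1 ≤ n)
    (p : ℝ) (hp : p ∈ Set.Ioo (0 : ℝ) 1) :
    ∑ k ∈ Finset.range (n + 1),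
        (n.choose k : ℝ) * p ^ k * (1 - p) ^ (n - k) * (1 + (k : ℝ))⁻¹ ≤
      ((n : ℝ) + 1)⁻¹ * p⁻¹ := by
  obtain ⟨hp0, hp1⟩ := hp
  have h1p : (0:ℝ) ≤ 1 - p := by linarith
  set f : ℕ → ℝ := fun j => ((n+1).choose j : ℝ) * p ^ j * (1 - p) ^ (n + 1 - j) with hf
  have key : ∀ k ∈ Finset.range (n+1),
      (n.choose k : ℝ) * p ^ k * (1 - p) ^ (n - k) * (1 + (k : ℝ))⁻¹
      = ((n:ℝ)+1)⁻¹ * p⁻¹ * f (k+1) := by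
    intro k hk
    have hk' : k ≤ n := Nat.lt_succ_iff.mp (Finset.mem_range.mp hk)
    have hc : ((n:ℝ)+1) * (n.choose k : ℝ) = ((n+1).choose (k+1) : ℝ) * ((k:ℝ)+1) := by
      have := Nat.add_one_mul_choose_eq n k
      exact_mod_cast congrArg (Nat.cast : ℕ → ℝ) this
    have hsub : n + 1 - (k + 1) = n - k := by omega
    simp only [hf, hsub, pow_succ]
    have hk1 : (1 : ℝ) + (k:ℝ) ≠ 0 := by positivity
    have hn1 : ((n:ℝ)+1) ≠ 0 := by positivity
    field_simp
    linear_combination hc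
  rw [Finset.sum_congr rfl key, ← Finset.mul_sum]
  have hsum1 : ∑ j ∈ Finset.range (n+2), f j = 1 := by
    have := add_pow p (1-p) (n+1)
    simp only [add_sub_cancel, one_pow] at this
    rw [hf]
    simp only
    rw [show ∑ j ∈ Finset.range (n+2), ((n+1).choose j : ℝ) * p ^ j * (1 - p) ^ (n + 1 - j)
        = ∑ j ∈ Finset.range (n+1+1), p ^ j * (1-p) ^ (n+1-j) * ((n+1).choose j : ℝ) from
      Finset.sum_congr rfl (fun j _ => by ring)]
    rw [← this]
  have hshift : ∑ k ∈ Finset.range (n+1), f (k+1) ≤ 1 := by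
    have h0 : 0 ≤ f 0 := by
      have : (0:ℝ) ≤ (1-p)^(n+1) := pow_nonneg h1p _
      simpa [hf] using this
    have := Finset.sum_range_succ' f (n+1)
    -- this : ∑ j in range (n+2), f j = (∑ k in range (n+1), f (k+1)) + f 0
    rw [hsum1] at this
    linarith
  have hc0 : (0:ℝ) ≤ ((n:ℝ)+1)⁻¹ * p⁻¹ := by positivity
  calc ((n:ℝ)+1)⁻¹ * p⁻¹ * ∑ k ∈ Finset.range (n+1), f (k+1)
      ≤ ((n:ℝ)+1)⁻¹ * p⁻¹ * 1 := by
        exact mul_le_mul_of_nonneg_left hshift hc0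
    _ = ((n:ℝ)+1)⁻¹ * p⁻¹ := by ring
end

section
/- Let (p₁,...,p_m) and (p'₁,...,p'_m) be two families of p-values, β, β' ∈ (0,1), r ∈ {0,...,m}, and assume that for every t of the form βk/m with max(r,1) ≤ k ≤ m and every i, 1{p_i ≤ t} ≤ 1{p'_i ≤ tβ'/β}. Then on the event where the BH procedure at level β applied to (p_i) makes at least r rejections, every hypothesis rejected by BH at level β on (p_i) is also rejected by BH at level β' on (p'_i). -/
open Finset

/-- The number of rejections of the BH procedure at level `α` applied to the
`p`-values `p : Fin m → ℝ`. -/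
noncomputable def bhCount (α : ℝ) (m : ℕ) (p : Fin m → ℝ) : ℕ :=
  ((Finset.range (m + 1)).filter
    (fun k : ℕ =>
      k ≤ (Finset.univ.filter (fun j : Fin m => p j ≤ α * (k : ℝ) / m)).card)).sup id

lemma bhCount_mem (α : ℝ) (m : ℕ) (p : Fin m → ℝ) :
    bhCount α m p ∈ ((Finset.range (m + 1)).filter
    (fun k : ℕ =>
      k ≤ (Finset.univ.filter (fun j : Fin m => p j ≤ α * (k : ℝ) / m)).card)) := by
  have hne : ((Finset.range (m + 1)).filter
      (fun k : ℕ =>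
        k ≤ (Finset.univ.filter (fun j : Fin m => p j ≤ α * (k : ℝ) / m)).card)).Nonempty := by
    refine ⟨0, ?_⟩
    simp [Finset.mem_filter]
  obtain ⟨b, hb, hbe⟩ := Finset.exists_mem_eq_sup _ hne id
  rw [bhCount, hbe]; exact hb

lemma le_bhCount (α : ℝ) (m : ℕ) (p : Fin m → ℝ) (k : ℕ) (hk : k ≤ m)
    (h : k ≤ (Finset.univ.filter (fun j : Fin m => p j ≤ α * (k : ℝ) / m)).card) :
    k ≤ bhCount α m p := by
  have : k ∈ ((Finset.range (m + 1)).filter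
      (fun k : ℕ =>
        k ≤ (Finset.univ.filter (fun j : Fin m => p j ≤ α * (k : ℝ) / m)).card)) := by
    simp [Finset.mem_filter, Nat.lt_succ_iff, hk, h]
  exact Finset.le_sup (f := id) this

/-- BH domination lemma: if for every threshold `t = β k / m` with
`max r 1 ≤ k ≤ m` and every index `i`, `p i ≤ t` implies `p' i ≤ t β' / β`,
then whenever BH at level `β` on `p` makes at least `r` rejections, every
hypothesis it rejects is also rejected by BH at level `β'` on `p'`. -/
theorem bh_domination (m : ℕ) (hm : 1 ≤ m) (β β' : ℝ)
    (hβ : β ∈ Set.Ioo (0 : ℝ) 1) (hβ' : β' ∈ Set.Ioo (0 : ℝ) 1)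
    (r : ℕ) (hr : r ≤ m) (p p' : Fin m → ℝ)
    (hdom : ∀ k : ℕ, max r 1 ≤ k → k ≤ m → ∀ i : Fin m,
      p i ≤ β * k / m → p' i ≤ (β * k / m) * β' / β)
    (hrej : r ≤ bhCount β m p) :
    ∀ i : Fin m, p i ≤ β * (bhCount β m p) / m →
      p' i ≤ β' * (bhCount β' m p') / m := by
  intro i hi
  set K := bhCount β m p with hK
  have hmem := bhCount_mem β m p
  rw [Finset.mem_filter, Finset.mem_range, Nat.lt_succ_iff] at hmem
  obtain ⟨hKm, hKcard⟩ := hmem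
  have hβ0 : (0:ℝ) < β := hβ.1
  have hβ'0 : (0:ℝ) < β' := hβ'.1
  have hm0 : (0:ℝ) < (m:ℝ) := by exact_mod_cast hm
  have key : ∀ k : ℕ, max r 1 ≤ k → k ≤ m → ∀ j : Fin m,
      p j ≤ β * k / m → p' j ≤ β' * k / m := by
    intro k h1 h2 j hj
    have := hdom k h1 h2 j hj
    have heq : (β * k / m) * β' / β = β' * k / m := by
      field_simp
    linarith [heq ▸ this]
  rcases Nat.eq_zero_or_pos K with h0 | hKpos
  · -- K = 0 : p i ≤ 0, use k = 1
    have hr0 : r = 0 := by omega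
    have hpi : p i ≤ β * (1:ℕ) / m := by
      rw [h0] at hi
      have : β * ((0:ℕ):ℝ) / m = 0 := by simp
      rw [this] at hi
      have : (0:ℝ) ≤ β * (1:ℕ) / m := by positivity
      linarith
    have hp'i : p' i ≤ β' * (1:ℕ) / m := key 1 (by omega) hm i hpi
    have h1le : 1 ≤ bhCount β' m p' := by
      apply le_bhCount _ _ _ 1 hm
      rw [Finset.one_le_card]
      exact ⟨i, by simpa using hp'i⟩
    have : β' * (1:ℕ) / m ≤ β' * (bhCount β' m p') / m := by
      gcongr
    linarith
  · -- K ≥ 1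
    have hmax : max r 1 ≤ K := by omega
    have hsub : (Finset.univ.filter (fun j : Fin m => p j ≤ β * (K : ℝ) / m)) ⊆
        (Finset.univ.filter (fun j : Fin m => p' j ≤ β' * (K : ℝ) / m)) := by
      intro j hj
      rw [Finset.mem_filter] at hj ⊢
      exact ⟨hj.1, key K hmax hKm j hj.2⟩
    have hKle : K ≤ bhCount β' m p' := by
      apply le_bhCount _ _ _ K hKm
      exact hKcard.trans (Finset.card_le_card hsub)
    have hp'i : p' i ≤ β' * (K:ℝ) / m := key K hmax hKm i hi
    have : β' * (K:ℝ) / m ≤ β' * (bhCount β' m p') / m := by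
      gcongr
    linarith
end

section
/- Let Φ̄ denote the standard Gaussian upper tail function and φ the standard Gaussian density. For all y ≥ 0 and u ∈ (0, Φ̄(1)], Φ̄(Φ̄⁻¹(u) − y) − u ≤ 2·u·y·Φ̄⁻¹(u)·exp(y·Φ̄⁻¹(u)). -/
open Real MeasureTheory

/-- Standard Gaussian density. -/
noncomputable def stdGaussPDF (x : ℝ) : ℝ :=
  (Real.sqrt (2 * Real.pi))⁻¹ * Real.exp (-x ^ 2 / 2)

/-- Standard Gaussian upper tail function `Φ̄(x) = ∫_x^∞ φ(t) dt`. -/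
noncomputable def stdGaussTail (x : ℝ) : ℝ :=
  ∫ t in Set.Ioi x, stdGaussPDF t

lemma stdGaussPDF_pos (x : ℝ) : 0 < stdGaussPDF x := by
  unfold stdGaussPDF
  have := Real.pi_pos
  positivity

lemma stdGaussPDF_integrable : Integrable stdGaussPDF := by
  have h : Integrable (fun x : ℝ => Real.exp (-(1/2 : ℝ) * x ^ 2)) :=
    integrable_exp_neg_mul_sq (by norm_num)
  have heq : stdGaussPDF = fun x => (Real.sqrt (2 * Real.pi))⁻¹ * Real.exp (-(1/2 : ℝ) * x ^ 2) := by
    funext x; unfold stdGaussPDF; ring_nf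
  rw [heq]
  exact h.const_mul _

lemma stdGaussPDF_hasDerivAt (t : ℝ) :
    HasDerivAt stdGaussPDF (-t * stdGaussPDF t) t := by
  have h1 : HasDerivAt (fun s : ℝ => -s ^ 2 / 2) (-t) t := by
    have := ((hasDerivAt_pow 2 t).neg).div_const 2
    exact this.congr_deriv (by norm_num; ring)
  have h2 := (h1.exp).const_mul (Real.sqrt (2 * Real.pi))⁻¹
  have heq : -t * stdGaussPDF t = (Real.sqrt (2 * Real.pi))⁻¹ * (Real.exp (-t ^ 2 / 2) * -t) := by
    unfold stdGaussPDF; ring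
  rw [heq]
  exact h2

lemma stdGaussTail_split {a b : ℝ} (hab : a ≤ b) :
    stdGaussTail a = (∫ t in Set.Ioc a b, stdGaussPDF t) + stdGaussTail b := by
  unfold stdGaussTail
  rw [← MeasureTheory.setIntegral_union (Set.Ioc_disjoint_Ioi le_rfl) measurableSet_Ioi
      stdGaussPDF_integrable.integrableOn stdGaussPDF_integrable.integrableOn,
      Set.Ioc_union_Ioi_eq_Ioi hab]

lemma stdGaussTail_nonneg (x : ℝ) : 0 ≤ stdGaussTail x :=
  setIntegral_nonneg measurableSet_Ioi fun t _ => (stdGaussPDF_pos t).le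

lemma stdGaussTail_strictAnti {a b : ℝ} (hab : a < b) : stdGaussTail b < stdGaussTail a := by
  rw [stdGaussTail_split hab.le]
  have hpos : 0 < ∫ t in Set.Ioc a b, stdGaussPDF t := by
    rw [← intervalIntegral.integral_of_le hab.le]
    exact intervalIntegral.intervalIntegral_pos_of_pos
      stdGaussPDF_integrable.intervalIntegrable (fun t => stdGaussPDF_pos t) hab
  linarith

lemma stdGaussPDF_tendsto_zero : Filter.Tendsto stdGaussPDF Filter.atTop (nhds 0) := by
  have h1 : Filter.Tendsto (fun t : ℝ => -t ^ 2 / 2) Filter.atTop Filter.atBot := by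
    apply Filter.Tendsto.atBot_div_const (by norm_num : (0:ℝ) < 2)
    exact Filter.tendsto_neg_atTop_atBot.comp (Filter.tendsto_pow_atTop two_ne_zero)
  have h2 := Real.tendsto_exp_atBot.comp h1
  have h3 := h2.const_mul (Real.sqrt (2 * Real.pi))⁻¹
  rw [mul_zero] at h3
  exact h3

/-- Classical bound `φ(x) ≤ 2 x Φ̄(x)` for `x ≥ 1`. -/
lemma stdGaussPDF_le (x : ℝ) (hx : 1 ≤ x) : stdGaussPDF x ≤ 2 * x * stdGaussTail x := by
  have hx0 : 0 < x := lt_of_lt_of_le one_pos hx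
  set g : ℝ → ℝ := fun t => -(stdGaussPDF t / t) with hg
  set g' : ℝ → ℝ := fun t => (1 + (t ^ 2)⁻¹) * stdGaussPDF t with hg'
  have hderiv : ∀ t ∈ Set.Ici x, HasDerivAt g (g' t) t := by
    intro t ht
    have ht0 : 0 < t := lt_of_lt_of_le hx0 ht
    have h := ((stdGaussPDF_hasDerivAt t).div (hasDerivAt_id t) ht0.ne').neg
    refine h.congr_deriv ?_
    have ht2 : t ^ 2 * t⁻¹ ^ 2 = 1 := by
      rw [← mul_pow, mul_inv_cancel₀ ht0.ne', one_pow]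
    simp only [id, hg']
    field_simp
    ring
  have hpos : ∀ t ∈ Set.Ioi x, 0 ≤ g' t := by
    intro t ht
    have ht0 : 0 < t := lt_trans hx0 ht
    have := stdGaussPDF_pos t
    positivity
  have htend : Filter.Tendsto g Filter.atTop (nhds 0) := by
    have h1 : Filter.Tendsto (fun t : ℝ => stdGaussPDF t * t⁻¹) Filter.atTop (nhds (0 * 0)) :=
      stdGaussPDF_tendsto_zero.mul tendsto_inv_atTop_zero
    rw [mul_zero] at h1
    have h2 := h1.neg
    rw [neg_zero] at h2
    exact h2
  have hint : IntegrableOn g' (Set.Ioi x) :=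
    integrableOn_Ioi_deriv_of_nonneg' hderiv hpos htend
  have hkey : ∫ t in Set.Ioi x, g' t = 0 - g x :=
    integral_Ioi_of_hasDerivAt_of_nonneg' hderiv hpos htend
  have hgx : 0 - g x = stdGaussPDF x / x := by simp [hg]
  have hmono : ∫ t in Set.Ioi x, g' t ≤ ∫ t in Set.Ioi x, (1 + (x ^ 2)⁻¹) * stdGaussPDF t := by
    apply setIntegral_mono_on hint (stdGaussPDF_integrable.integrableOn.const_mul _)
      measurableSet_Ioi
    intro t ht
    have ht0 : 0 < t := lt_trans hx0 ht
    have hle : (t ^ 2)⁻¹ ≤ (x ^ 2)⁻¹ := by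
      apply inv_anti₀ (by positivity)
      have : x ≤ t := (le_of_lt ht)
      nlinarith
    have := stdGaussPDF_pos t
    simp only [hg']
    nlinarith
  rw [hkey, hgx] at hmono
  rw [integral_const_mul] at hmono
  have htail : (∫ t in Set.Ioi x, stdGaussPDF t) = stdGaussTail x := rfl
  rw [htail] at hmono
  -- φ(x)/x ≤ (1 + 1/x²) Φ̄(x); multiply through
  have h1x : (x ^ 2)⁻¹ ≤ 1 := by
    rw [inv_le_one_iff₀]
    right; nlinarith
  have htn := stdGaussTail_nonneg x
  have := mul_le_mul_of_nonneg_left hmono hx0.le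
  rw [mul_div_cancel₀ _ hx0.ne'] at this
  calc stdGaussPDF x ≤ x * ((1 + (x ^ 2)⁻¹) * stdGaussTail x) := this
    _ ≤ x * (2 * stdGaussTail x) := by
        apply mul_le_mul_of_nonneg_left _ hx0.le
        nlinarith
    _ = 2 * x * stdGaussTail x := by ring

/-- For all `y ≥ 0` and `u ∈ (0, Φ̄(1)]`, writing `x = Φ̄⁻¹(u)`,
`Φ̄(x - y) - u ≤ 2 u y x exp(y x)`. -/
theorem gauss_tail_shift_bound (y : ℝ) (hy : 0 ≤ y) (u x : ℝ)
    (hu0 : 0 < u) (hu1 : u ≤ stdGaussTail 1) (hx : stdGaussTail x = u) :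
    stdGaussTail (x - y) - u ≤ 2 * u * y * x * Real.exp (y * x) := by
  have hx1 : 1 ≤ x := by
    by_contra h
    push_neg at h
    have := stdGaussTail_strictAnti h
    rw [hx] at this
    linarith
  have hx0 : 0 < x := lt_of_lt_of_le one_pos hx1
  have hsplit := stdGaussTail_split (show x - y ≤ x by linarith)
  have hbound : ∀ t ∈ Set.Ioc (x - y) x,
      stdGaussPDF t ≤ stdGaussPDF x * Real.exp (y * x) := by
    intro t ht
    obtain ⟨ht1, ht2⟩ := ht
    unfold stdGaussPDF
    rw [mul_assoc, ← Real.exp_add]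
    apply mul_le_mul_of_nonneg_left _ (by positivity)
    apply Real.exp_le_exp.2
    -- need -t²/2 ≤ -x²/2 + y x, i.e. x² - t² ≤ 2 x y
    rcases le_or_gt 0 (x + t) with h | h
    · have h1 : (x - t) * (x + t) ≤ y * (x + t) :=
        mul_le_mul_of_nonneg_right (by linarith) h
      have h2 : y * (x + t) ≤ y * (2 * x) :=
        mul_le_mul_of_nonneg_left (by linarith) hy
      nlinarith
    · nlinarith [mul_nonneg hy hx0.le]
  have hintle : (∫ t in Set.Ioc (x - y) x, stdGaussPDF t)
      ≤ y * (stdGaussPDF x * Real.exp (y * x)) := by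
    calc (∫ t in Set.Ioc (x - y) x, stdGaussPDF t)
        ≤ ∫ _t in Set.Ioc (x - y) x, stdGaussPDF x * Real.exp (y * x) :=
          setIntegral_mono_on stdGaussPDF_integrable.integrableOn
            (integrableOn_const measure_Ioc_lt_top.ne)
            measurableSet_Ioc hbound
      _ = (volume (Set.Ioc (x - y) x)).toReal * (stdGaussPDF x * Real.exp (y * x)) := by
          rw [setIntegral_const, smul_eq_mul, measureReal_def]
      _ = y * (stdGaussPDF x * Real.exp (y * x)) := by
          rw [Real.volume_Ioc, ENNReal.toReal_ofReal (by linarith : (0:ℝ) ≤ x - (x - y))]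
          ring
  have hpdf := stdGaussPDF_le x hx1
  rw [hx] at hpdf
  have hE := Real.exp_pos (y * x)
  have : stdGaussTail (x - y) - u = ∫ t in Set.Ioc (x - y) x, stdGaussPDF t := by
    rw [hsplit, hx]; ring
  rw [this]
  calc (∫ t in Set.Ioc (x - y) x, stdGaussPDF t)
      ≤ y * (stdGaussPDF x * Real.exp (y * x)) := hintle
    _ ≤ y * (2 * x * u * Real.exp (y * x)) := by
        apply mul_le_mul_of_nonneg_left _ hy
        exact mul_le_mul_of_nonneg_right hpdf hE.le
    _ = 2 * u * y * x * Real.exp (y * x) := by ring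
end

section
/- Let f₀, f̄₁ be probability densities with respect to a measure ν, π₀ + π₁ = 1 with π₀, π₁ ∈ (0,1), f = π₀f₀ + π₁f̄₁, and r(x) = π₁f̄₁(x)/f(x), T(x) = 1 − r(x). Suppose t(α) ∈ (α, 1) satisfies ∫ 1{T(x) ≤ t(α)}(T(x) − α)f(x)dν(x) = 0. Then for any measurable T' and threshold t' with ∫ 1{T'(x) ≤ t'}(T(x) − α)f(x)dν(x) ≤ 0, we have ∫ 1{T(x) ≤ t(α)} f̄₁(x)dν(x) ≥ ∫ 1{T'(x) ≤ t'} f̄₁(x)dν(x). -/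
open MeasureTheory

/-- Optimality of thresholding the local FDR `T = 1 - r`: if
`∫_{T ≤ t(α)} (T - α) f dν = 0` with `t(α) ∈ (α, 1)`, then for any other
measurable `T'` and threshold `t'` satisfying `∫_{T' ≤ t'} (T - α) f dν ≤ 0`,
the detection probability `∫_{T ≤ t(α)} f̄₁ dν` is at least
`∫_{T' ≤ t'} f̄₁ dν`. -/
theorem lr_threshold_optimal {Z : Type*} [MeasurableSpace Z] (ν : Measure Z)
    (f₀ f₁ : Z → ℝ) (hf₀ : Measurable f₀) (hf₁ : Measurable f₁)
    (hf₀pos : ∀ x, 0 < f₀ x) (hf₁pos : ∀ x, 0 < f₁ x)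
    (hf₀int : ∫ x, f₀ x ∂ν = 1) (hf₁int : ∫ x, f₁ x ∂ν = 1)
    (π₀ π₁ : ℝ) (hπ₀ : π₀ ∈ Set.Ioo (0 : ℝ) 1) (hπ₁ : π₁ ∈ Set.Ioo (0 : ℝ) 1)
    (hsum : π₀ + π₁ = 1)
    (f : Z → ℝ) (hf : f = fun x => π₀ * f₀ x + π₁ * f₁ x)
    (T : Z → ℝ) (hT : T = fun x => 1 - π₁ * f₁ x / f x)
    (α tα : ℝ) (hα : α ∈ Set.Ioo (0 : ℝ) 1) (htα : tα ∈ Set.Ioo α 1)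
    (T' : Z → ℝ) (hT' : Measurable T') (t' : ℝ)
    (hint1 : Integrable (fun x => (T x - α) * f x) ν)
    (hint2 : Integrable f₁ ν)
    (heq : ∫ x in {x | T x ≤ tα}, (T x - α) * f x ∂ν = 0)
    (hle : ∫ x in {x | T' x ≤ t'}, (T x - α) * f x ∂ν ≤ 0) :
    ∫ x in {x | T' x ≤ t'}, f₁ x ∂ν ≤ ∫ x in {x | T x ≤ tα}, f₁ x ∂ν := by
  have hπ₁pos : 0 < π₁ := hπ₁.1
  have hfpos : ∀ x, 0 < f x := by
    intro x
    simp only [hf]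
    nlinarith [mul_pos hπ₀.1 (hf₀pos x), mul_pos hπ₁.1 (hf₁pos x)]
  have hmf : Measurable f := by rw [hf]; measurability
  have hmT : Measurable T := by
    rw [hT]
    exact measurable_const.sub ((measurable_const.mul hf₁).div hmf)
  set A : Set Z := {x | T x ≤ tα} with hAdef
  set B : Set Z := {x | T' x ≤ t'} with hBdef
  have hA : MeasurableSet A := measurableSet_le hmT measurable_const
  have hB : MeasurableSet B := measurableSet_le hT' measurable_const
  -- key pointwise identity
  have hkey : ∀ x, (1 - T x) * f x = π₁ * f₁ x := by
    intro x
    rw [hT]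
    field_simp [(hfpos x).ne']
    ring
  set h : Z → ℝ := fun x => (1 - α) * (tα - T x) * f x with hhdef
  have hsplit : h = fun x => (tα - α) * ((1 - T x) * f x) - (1 - tα) * ((T x - α) * f x) := by
    funext x; simp only [hhdef]; ring
  have h1T : Integrable (fun x => (1 - T x) * f x) ν := by
    have : (fun x => (1 - T x) * f x) = fun x => π₁ * f₁ x := funext hkey
    rw [this]; exact hint2.const_mul π₁
  have hhint : Integrable h ν := by
    rw [hsplit]
    exact ((h1T.const_mul _).sub (hint1.const_mul _))
  -- compute ∫ over a set
  have hset : ∀ s : Set Z, MeasurableSet s →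
      ∫ x in s, h x ∂ν = (tα - α) * (π₁ * ∫ x in s, f₁ x ∂ν)
        - (1 - tα) * ∫ x in s, (T x - α) * f x ∂ν := by
    intro s hs
    rw [hsplit]
    rw [integral_sub ((h1T.const_mul _).restrict) ((hint1.const_mul _).restrict)]
    rw [integral_const_mul, integral_const_mul]
    congr 2
    simp only [hkey]
    rw [integral_const_mul]
  -- pointwise sign of h
  have hsign_pos : ∀ x ∈ A, 0 ≤ h x := by
    intro x hx
    have : T x ≤ tα := hx
    have h1 : (0:ℝ) ≤ 1 - α := by linarith [hα.2]
    exact mul_nonneg (mul_nonneg h1 (by linarith)) (hfpos x).le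
  have hsign_neg : ∀ x, x ∉ A → h x ≤ 0 := by
    intro x hx
    have : tα < T x := lt_of_not_ge hx
    have h1 : (0:ℝ) ≤ 1 - α := by linarith [hα.2]
    have := mul_nonpos_of_nonpos_of_nonneg
      (mul_nonpos_of_nonneg_of_nonpos h1 (by linarith : tα - T x ≤ 0)) (hfpos x).le
    simpa [hhdef] using this
  -- the indicator comparison
  have hmain : ∫ x in B, h x ∂ν ≤ ∫ x in A, h x ∂ν := by
    rw [← integral_indicator hA, ← integral_indicator hB]
    apply integral_mono (hhint.indicator hB) (hhint.indicator hA)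
    intro x
    by_cases hxA : x ∈ A
    · by_cases hxB : x ∈ B
      · simp [Set.indicator_of_mem, hxA, hxB]
      · simp only [Set.indicator_of_mem hxA, Set.indicator_of_notMem hxB]
        exact hsign_pos x hxA
    · by_cases hxB : x ∈ B
      · simp only [Set.indicator_of_notMem hxA, Set.indicator_of_mem hxB]
        exact hsign_neg x hxA
      · simp [Set.indicator_of_notMem, hxA, hxB]
  have hIA := hset A hA
  have hIB := hset B hB
  rw [heq] at hIA
  have htaα : 0 < tα - α := by linarith [htα.1]
  have h1ta : 0 < 1 - tα := by linarith [htα.2]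
  have hJ : (1 - tα) * ∫ x in B, (T x - α) * f x ∂ν ≤ 0 :=
    mul_nonpos_of_nonneg_of_nonpos h1ta.le hle
  rw [hIA, hIB] at hmain
  have hstep : (tα - α) * (π₁ * ∫ x in B, f₁ x ∂ν) ≤ (tα - α) * (π₁ * ∫ x in A, f₁ x ∂ν) := by
    linarith
  have := le_of_mul_le_mul_left hstep htaα
  exact le_of_mul_le_mul_left this hπ₁pos
end
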